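/- For the critical case h = 1/4, the r-th iterate of g(x) = 1/x - (1-x)(1-√(1-x))/(x²/2) satisfies g^{∘r}(x) = 1 - (r + 1/√(1-x))^{-2} for all x ∈ [0,1) and r ≥ 0. -/
import Mathlib


/-- The critical offspring generating function `g_{λ_c}` (case `h = 1/4`),
extended continuously at `0` by `g(0) = 1 - 1/4 = 3/4`. -/
noncomputable def gCrit (x : ℝ) : ℝ :=
  if x = 0 then 3/4
  else 1/x - (1 - x) * (1 - Real.sqrt (1 - x)) / (x^2 / 2)

lemma gCrit_key (t : ℝ) (ht : 1 ≤ t) :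
    gCrit (1 - 1/t^2) = 1 - 1/(t+1)^2 := by
  rcases eq_or_lt_of_le ht with h | h
  · subst h
    norm_num [gCrit]
  · have ht0 : 0 < t := by linarith
    have ht1 : (1:ℝ)/t^2 < 1 := by
      rw [div_lt_one (by positivity)]
      nlinarith
    have hx : 1 - 1/t^2 ≠ 0 := by linarith
    have hs : Real.sqrt (1 - (1 - 1/t^2)) = 1/t := by
      rw [show 1 - (1 - 1/t^2) = (1/t)^2 by ring, Real.sqrt_sq (by positivity)]
    unfold gCrit
    rw [if_neg hx, hs]
    have ht0' : t ≠ 0 := ne_of_gt ht0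
    have ht1' : t + 1 ≠ 0 := by positivity
    have h2 : t^2 - 1 ≠ 0 := by nlinarith
    rw [show (1:ℝ) - 1/t^2 = (t^2-1)/t^2 by field_simp]
    field_simp
    ring

/-- in the critical case, `g^{∘r}(x) = 1 - (r + 1/√(1-x))^{-2}`
for all `x ∈ [0,1)` and `r ≥ 0`. -/
theorem stmt_11 :
    ∀ (r : ℕ) (x : ℝ), x ∈ Set.Ico (0 : ℝ) 1 →
      gCrit^[r] x = 1 - ((r : ℝ) + 1 / Real.sqrt (1 - x))⁻¹ ^ 2 := by
  intro r x hx
  obtain ⟨hx0, hx1⟩ := hx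
  have h1x : 0 < 1 - x := by linarith
  have hs0 : 0 < Real.sqrt (1 - x) := Real.sqrt_pos.mpr h1x
  set s := 1 / Real.sqrt (1 - x) with hsdef
  have hs1 : 1 ≤ s := one_le_one_div hs0 (Real.sqrt_le_one.mpr (by linarith))
  induction r with
  | zero =>
    simp only [Function.iterate_zero, id_eq, Nat.cast_zero, zero_add]
    have hinv : s⁻¹ = Real.sqrt (1 - x) := by rw [hsdef, one_div, inv_inv]
    rw [hinv, Real.sq_sqrt h1x.le]
    ring
  | succ n ih =>
    have h1 : 1 ≤ (n : ℝ) + s := by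
      have : (0:ℝ) ≤ n := Nat.cast_nonneg n
      linarith
    rw [Function.iterate_succ_apply', ih, inv_pow, ← one_div, gCrit_key _ h1]
    push_cast
    rw [show ((n:ℝ)+1)+s = ((n:ℝ)+s)+1 by ring, inv_pow, ← one_div]
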